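/- Direct-sum decomposition from a ladder of long exact sequences of vector spaces (the abstract form of the decomposition H^{p,q}(X̃) ≅ H^{p,q}(X) ⊕ H^{p,q}(E)/π_E*H^{p,q}(Z) in formula (3.8), used to derive the blow-up formula): Let k be a field, and let ⋯ → A_n --a_n--> B_n --b_n--> C_n --c_n--> A_{n+1} → ⋯ and ⋯ → A'_n --a'_n--> B'_n --b'_n--> C'_n --c'_n--> A'_{n+1} → ⋯ (n ∈ ℤ) be exact sequences of k-vector spaces, with k-linear maps α_n : A_n → A'_n, β_n : B_n → B'_n, γ_n : C_n → C'_n commuting with all horizontal maps. If every α_n is an isomorphism and every β_n and γ_n is injective, then for each n there is an isomorphism of k-vector spaces B'_n ≅ B_n ⊕ (C'_n/γ_n(C_n)). -/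

import Mathlib

/-!
The map `b' n` induces a map `coker β n → coker γ n`. It is injective by a four-lemma chase
through `A n → B n → C n → A (n + 1)` (using that `α n` is onto and `α (n + 1)` one-to-one), and
surjective by one through `B n → C n → A (n + 1) → B (n + 1)` (using that `α (n + 1)` is onto and
`β (n + 1)` one-to-one). Since `β n` is injective and short exact sequences of vector spaces split,
`B' n ≅ B n × coker β n ≅ B n × coker γ n`.
-/

open Function

namespace LinearMap

section Ladder

variable {R : Type*} [Ring R]
  {A B C A₁ B₁ A' B' C' A₁' B₁' : Type*}
  [AddCommGroup A] [AddCommGroup B] [AddCommGroup C] [AddCommGroup A₁] [AddCommGroup B₁]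
  [AddCommGroup A'] [AddCommGroup B'] [AddCommGroup C'] [AddCommGroup A₁'] [AddCommGroup B₁']
  [Module R A] [Module R B] [Module R C] [Module R A₁] [Module R B₁]
  [Module R A'] [Module R B'] [Module R C'] [Module R A₁'] [Module R B₁']
  {a : A →ₗ[R] B} {b : B →ₗ[R] C} {c : C →ₗ[R] A₁} {a₁ : A₁ →ₗ[R] B₁}
  {a' : A' →ₗ[R] B'} {b' : B' →ₗ[R] C'} {c' : C' →ₗ[R] A₁'} {a₁' : A₁' →ₗ[R] B₁'}
  {α : A →ₗ[R] A'} {β : B →ₗ[R] B'} {γ : C →ₗ[R] C'} {α₁ : A₁ →ₗ[R] A₁'} {β₁ : B₁ →ₗ[R] B₁'}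

theorem range_le_comap_range_of_comm (hβγ : ∀ x, γ (b x) = b' (β x)) :
    range β ≤ (range γ).comap b' := by
  rintro _ ⟨y, rfl⟩
  exact ⟨b y, hβγ y⟩

theorem injective_mapQ_range_of_ladder (hbc : Exact b c) (ha'b' : Exact a' b')
    (hb'c' : Exact b' c') (hαβ : ∀ x, β (a x) = a' (α x)) (hβγ : ∀ x, γ (b x) = b' (β x))
    (hγα₁ : ∀ x, α₁ (c x) = c' (γ x)) (hα : Surjective α) (hα₁ : Injective α₁) :
    Injective ((range β).mapQ (range γ) b' (range_le_comap_range_of_comm hβγ)) := by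
  rw [← ker_eq_bot, ker_eq_bot']
  intro m hm
  obtain ⟨y', rfl⟩ := Submodule.Quotient.mk_surjective _ m
  obtain ⟨z, hz⟩ : b' y' ∈ range γ := by simpa using hm
  have hcz : c z = 0 := hα₁ <| by rw [hγα₁, hz, hb'c'.apply_apply_eq_zero, map_zero]
  obtain ⟨y, rfl⟩ := (hbc z).1 hcz
  obtain ⟨x', hx'⟩ := (ha'b' (y' - β y)).1 <| by rw [map_sub, ← hβγ, hz, sub_self]
  obtain ⟨x, rfl⟩ := hα x'
  refine (Submodule.Quotient.mk_eq_zero _).2 ⟨y + a x, ?_⟩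
  rw [map_add, hαβ, hx', add_sub_cancel]

theorem surjective_mapQ_range_of_ladder (hca₁ : Exact c a₁) (hb'c' : Exact b' c')
    (hc'a₁' : Exact c' a₁') (hβγ : ∀ x, γ (b x) = b' (β x)) (hγα₁ : ∀ x, α₁ (c x) = c' (γ x))
    (hα₁β₁ : ∀ x, β₁ (a₁ x) = a₁' (α₁ x)) (hα₁ : Surjective α₁) (hβ₁ : Injective β₁) :
    Surjective ((range β).mapQ (range γ) b' (range_le_comap_range_of_comm hβγ)) := by
  intro w
  obtain ⟨w, rfl⟩ := Submodule.Quotient.mk_surjective _ w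
  obtain ⟨x, hx⟩ := hα₁ (c' w)
  have hax : a₁ x = 0 := hβ₁ <| by rw [hα₁β₁, hx, hc'a₁'.apply_apply_eq_zero, map_zero]
  obtain ⟨z, rfl⟩ := (hca₁ x).1 hax
  obtain ⟨y', hy'⟩ := (hb'c' (w - γ z)).1 <| by rw [map_sub, ← hγα₁, hx, sub_self]
  refine ⟨Submodule.Quotient.mk y', (Submodule.Quotient.eq _).2 ⟨-z, ?_⟩⟩
  rw [map_neg, hy', sub_sub_cancel_left]

end Ladder

theorem nonempty_equiv_prod_quotient_range {K M N : Type*} [DivisionRing K]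
    [AddCommGroup M] [AddCommGroup N] [Module K M] [Module K N]
    (f : N →ₗ[K] M) (hf : Injective f) : Nonempty (M ≃ₗ[K] N × (M ⧸ range f)) := by
  obtain ⟨s, hs⟩ := (range f).exists_isCompl
  exact ⟨(Submodule.prodEquivOfIsCompl _ s hs).symm ≪≫ₗ
    (LinearEquiv.ofInjective f hf).symm.prodCongr (Submodule.quotientEquivOfIsCompl _ s hs).symm⟩

end LinearMap

open LinearMap in
theorem ladder_long_exact_direct_sum_general {k : Type*} [Field k]
    (A B C A' B' C' : ℤ → Type*)
    [∀ n, AddCommGroup (A n)] [∀ n, Module k (A n)]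
    [∀ n, AddCommGroup (B n)] [∀ n, Module k (B n)]
    [∀ n, AddCommGroup (C n)] [∀ n, Module k (C n)]
    [∀ n, AddCommGroup (A' n)] [∀ n, Module k (A' n)]
    [∀ n, AddCommGroup (B' n)] [∀ n, Module k (B' n)]
    [∀ n, AddCommGroup (C' n)] [∀ n, Module k (C' n)]
    (a : ∀ n, A n →ₗ[k] B n) (b : ∀ n, B n →ₗ[k] C n) (c : ∀ n, C n →ₗ[k] A (n + 1))
    (a' : ∀ n, A' n →ₗ[k] B' n) (b' : ∀ n, B' n →ₗ[k] C' n) (c' : ∀ n, C' n →ₗ[k] A' (n + 1))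
    (α : ∀ n, A n →ₗ[k] A' n) (β : ∀ n, B n →ₗ[k] B' n) (γ : ∀ n, C n →ₗ[k] C' n)
    (hexb : ∀ n, LinearMap.range (b n) = LinearMap.ker (c n))
    (hexc : ∀ n, LinearMap.range (c n) = LinearMap.ker (a (n + 1)))
    (hexa' : ∀ n, LinearMap.range (a' n) = LinearMap.ker (b' n))
    (hexb' : ∀ n, LinearMap.range (b' n) = LinearMap.ker (c' n))
    (hexc' : ∀ n, LinearMap.range (c' n) = LinearMap.ker (a' (n + 1)))
    (hc1 : ∀ n x, β n (a n x) = a' n (α n x))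
    (hc2 : ∀ n x, γ n (b n x) = b' n (β n x))
    (hc3 : ∀ n x, α (n + 1) (c n x) = c' n (γ n x))
    (hα : ∀ n, Function.Bijective (α n))
    (hβ : ∀ n, Function.Injective (β n))
    (n : ℤ) :
    Nonempty ((B' n) ≃ₗ[k] (B n) × ((C' n) ⧸ LinearMap.range (γ n))) := by
  have hcoker := LinearEquiv.ofBijective _
    ⟨injective_mapQ_range_of_ladder (exact_iff.2 (hexb n).symm) (exact_iff.2 (hexa' n).symm)
        (exact_iff.2 (hexb' n).symm) (hc1 n) (hc2 n) (hc3 n) (hα n).2 (hα (n + 1)).1,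
      surjective_mapQ_range_of_ladder (exact_iff.2 (hexc n).symm) (exact_iff.2 (hexb' n).symm)
        (exact_iff.2 (hexc' n).symm) (hc2 n) (hc3 n) (hc1 (n + 1)) (hα (n + 1)).2 (hβ (n + 1))⟩
  obtain ⟨e⟩ := nonempty_equiv_prod_quotient_range (β n) (hβ n)
  exact ⟨e ≪≫ₗ (LinearEquiv.refl k (B n)).prodCongr hcoker⟩

/-- Direct-sum decomposition from a ladder of `ℤ`-indexed long exact sequences
of vector spaces: if `α n` are isomorphisms and `β n`, `γ n` are injective,
then `B' n ≅ B n ⊕ (C' n ⧸ γ n (C n))` as `k`-vector spaces. -/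
theorem ladder_long_exact_direct_sum {k : Type*} [Field k]
    (A B C A' B' C' : ℤ → Type*)
    [∀ n, AddCommGroup (A n)] [∀ n, Module k (A n)]
    [∀ n, AddCommGroup (B n)] [∀ n, Module k (B n)]
    [∀ n, AddCommGroup (C n)] [∀ n, Module k (C n)]
    [∀ n, AddCommGroup (A' n)] [∀ n, Module k (A' n)]
    [∀ n, AddCommGroup (B' n)] [∀ n, Module k (B' n)]
    [∀ n, AddCommGroup (C' n)] [∀ n, Module k (C' n)]
    (a : ∀ n, A n →ₗ[k] B n) (b : ∀ n, B n →ₗ[k] C n) (c : ∀ n, C n →ₗ[k] A (n + 1))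
    (a' : ∀ n, A' n →ₗ[k] B' n) (b' : ∀ n, B' n →ₗ[k] C' n) (c' : ∀ n, C' n →ₗ[k] A' (n + 1))
    (α : ∀ n, A n →ₗ[k] A' n) (β : ∀ n, B n →ₗ[k] B' n) (γ : ∀ n, C n →ₗ[k] C' n)
    (hexa : ∀ n, LinearMap.range (a n) = LinearMap.ker (b n))
    (hexb : ∀ n, LinearMap.range (b n) = LinearMap.ker (c n))
    (hexc : ∀ n, LinearMap.range (c n) = LinearMap.ker (a (n + 1)))
    (hexa' : ∀ n, LinearMap.range (a' n) = LinearMap.ker (b' n))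
    (hexb' : ∀ n, LinearMap.range (b' n) = LinearMap.ker (c' n))
    (hexc' : ∀ n, LinearMap.range (c' n) = LinearMap.ker (a' (n + 1)))
    (hc1 : ∀ n x, β n (a n x) = a' n (α n x))
    (hc2 : ∀ n x, γ n (b n x) = b' n (β n x))
    (hc3 : ∀ n x, α (n + 1) (c n x) = c' n (γ n x))
    (hα : ∀ n, Function.Bijective (α n))
    (hβ : ∀ n, Function.Injective (β n))
    (hγ : ∀ n, Function.Injective (γ n))
    (n : ℤ) :
    Nonempty ((B' n) ≃ₗ[k] (B n) × ((C' n) ⧸ LinearMap.range (γ n))) :=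
  ladder_long_exact_direct_sum_general A B C A' B' C' a b c a' b' c' α β γ hexb hexc hexa' hexb'
    hexc' hc1 hc2 hc3 hα hβ n
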